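/- arXiv:2305.08812 — 2 statements merged into one kernel-verified Lean document; each statement's English description precedes it below -/
import Mathlib

section
/- Loop-invariant preservation under free driving, opposite direction (inductive step of Theorem 2, case safeDist_o(v1, v2) ≤ x2 − x1): Suppose v1 ≥ 0, v2 ≤ 0, x1 ≤ x2, safeDist_o(v1, v2) ≤ x2 − x1, −a_maxBrake ≤ a1 ≤ a_maxAccel, −a_maxAccel ≤ a2 ≤ a_maxBrake, 0 ≤ t ≤ ρ, and v1 + a1·s ≥ 0 and v2 + a2·s ≤ 0 for all s ∈ [0, t]. Let (x̃1, ṽ1, x̃2, ṽ2) be the kinematic update of (x1, v1, x2, v2) over duration t with accelerations a1, a2. Then x̃1 ≤ x̃2 and x̃1 + ṽ1²/(2·a_minBrake) ≤ x̃2 − ṽ2²/(2·a_minBrake). -/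
/-!
`safeDistO` splits into one share per vehicle, and each vehicle (the second after reflecting its
direction of travel) is treated separately. Over a step of length `t ≤ ρ` with acceleration at most
`amaxAccel`, a forward-moving vehicle covers no more than the response-time part of its share and
ends the step no faster than `v + ρ * amaxAccel`, so its braking distance stays within the braking
part. Hence the point where it would come to rest under `aminBrake` stays within its share, and the
two shares together fit into the gap `x2 - x1`.
-/

/-- RSS opposite-direction safe distance. -/
noncomputable def safeDistO (aminBrake amaxAccel ρ v1 v2 : ℝ) : ℝ :=
  ((v1 + (v1 + ρ * amaxAccel)) / 2) * ρ + (v1 + ρ * amaxAccel)^2 / (2 * aminBrake)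
  + ((|v2| + (|v2| + ρ * amaxAccel)) / 2) * ρ + (|v2| + ρ * amaxAccel)^2 / (2 * aminBrake)

/-- Distance covered by a vehicle of speed `v` that accelerates at `amaxAccel` for the response
time `ρ` and then brakes at `aminBrake` until it stops. -/
noncomputable def responseStopDist (aminBrake amaxAccel ρ v : ℝ) : ℝ :=
  ((v + (v + ρ * amaxAccel)) / 2) * ρ + (v + ρ * amaxAccel)^2 / (2 * aminBrake)

theorem safeDistO_eq_add (aminBrake amaxAccel ρ v1 v2 : ℝ) :
    safeDistO aminBrake amaxAccel ρ v1 v2 =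
      responseStopDist aminBrake amaxAccel ρ v1 + responseStopDist aminBrake amaxAccel ρ |v2| := by
  simp only [safeDistO, responseStopDist]
  ring

section OneVehicle

variable {aminBrake amaxAccel ρ v a t : ℝ}

theorem displacement_le_response (hv : 0 ≤ v) (hA : 0 ≤ amaxAccel) (ha : a ≤ amaxAccel)
    (ht0 : 0 ≤ t) (htρ : t ≤ ρ) :
    v * t + 1 / 2 * a * t ^ 2 ≤ ((v + (v + ρ * amaxAccel)) / 2) * ρ := by
  have hvt : v * t ≤ v * ρ := mul_le_mul_of_nonneg_left htρ hv
  have hat : a * t ^ 2 ≤ amaxAccel * ρ ^ 2 :=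
    calc a * t ^ 2 ≤ amaxAccel * t ^ 2 := mul_le_mul_of_nonneg_right ha (sq_nonneg t)
      _ ≤ amaxAccel * ρ ^ 2 := mul_le_mul_of_nonneg_left (pow_le_pow_left₀ ht0 htρ 2) hA
  linarith

theorem sq_speed_le_response (hA : 0 ≤ amaxAccel) (ha : a ≤ amaxAccel) (ht0 : 0 ≤ t)
    (htρ : t ≤ ρ) (hvt : 0 ≤ v + a * t) :
    (v + a * t) ^ 2 ≤ (v + ρ * amaxAccel) ^ 2 := by
  have hat : a * t ≤ ρ * amaxAccel :=
    calc a * t ≤ amaxAccel * t := mul_le_mul_of_nonneg_right ha ht0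
      _ ≤ amaxAccel * ρ := mul_le_mul_of_nonneg_left htρ hA
      _ = ρ * amaxAccel := mul_comm _ _
  exact pow_le_pow_left₀ hvt (by linarith) 2

theorem stopPoint_le_responseStopDist (hb : 0 < aminBrake) (hv : 0 ≤ v) (hA : 0 ≤ amaxAccel)
    (ha : a ≤ amaxAccel) (ht0 : 0 ≤ t) (htρ : t ≤ ρ) (hvt : 0 ≤ v + a * t) :
    v * t + 1 / 2 * a * t ^ 2 + (v + a * t) ^ 2 / (2 * aminBrake) ≤
      responseStopDist aminBrake amaxAccel ρ v := by
  have hbrake : (v + a * t) ^ 2 / (2 * aminBrake) ≤ (v + ρ * amaxAccel) ^ 2 / (2 * aminBrake) :=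
    div_le_div_of_nonneg_right (sq_speed_le_response hA ha ht0 htρ hvt) (by positivity)
  unfold responseStopDist
  linarith [displacement_le_response hv hA ha ht0 htρ]

end OneVehicle

theorem loop_invariant_free_driving_opposite_general
    (aminBrake amaxAccel ρ : ℝ)
    (hmin : 0 < aminBrake)
    (hacc : 0 < amaxAccel)
    (x1 x2 v1 v2 a1 a2 t : ℝ)
    (hv1 : v1 ≥ 0) (hv2 : v2 ≤ 0)
    (hdist : safeDistO aminBrake amaxAccel ρ v1 v2 ≤ x2 - x1)
    (ha1u : a1 ≤ amaxAccel)
    (ha2l : -amaxAccel ≤ a2)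
    (ht0 : 0 ≤ t) (htρ : t ≤ ρ)
    (hvsign : ∀ s : ℝ, 0 ≤ s → s ≤ t → v1 + a1 * s ≥ 0 ∧ v2 + a2 * s ≤ 0) :
    x1 + v1 * t + (1/2) * a1 * t^2 ≤ x2 + v2 * t + (1/2) * a2 * t^2 ∧
    (x1 + v1 * t + (1/2) * a1 * t^2) + (v1 + a1 * t)^2 / (2 * aminBrake)
      ≤ (x2 + v2 * t + (1/2) * a2 * t^2) - (v2 + a2 * t)^2 / (2 * aminBrake) := by
  obtain ⟨hspeed1, hspeed2⟩ := hvsign t ht0 le_rfl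
  have car1 := stopPoint_le_responseStopDist hmin hv1 hacc.le ha1u ht0 htρ hspeed1
  have car2 := stopPoint_le_responseStopDist (v := -v2) (a := -a2) hmin (neg_nonneg.2 hv2)
    hacc.le (by linarith) ht0 htρ (by linarith)
  rw [safeDistO_eq_add, abs_of_nonpos hv2] at hdist
  rw [show (-v2 + -a2 * t) ^ 2 = (v2 + a2 * t) ^ 2 by ring] at car2
  have hbrake1 : 0 ≤ (v1 + a1 * t) ^ 2 / (2 * aminBrake) := by positivity
  have hbrake2 : 0 ≤ (v2 + a2 * t) ^ 2 / (2 * aminBrake) := by positivity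
  constructor <;> linarith

/-- Loop-invariant preservation under free driving, opposite direction. -/
theorem loop_invariant_free_driving_opposite
    (aminBrake amaxBrake amaxAccel ρ : ℝ)
    (hmin : 0 < aminBrake) (hminmax : aminBrake < amaxBrake)
    (hacc : 0 < amaxAccel) (hρ : 0 < ρ)
    (x1 x2 v1 v2 a1 a2 t : ℝ)
    (hv1 : v1 ≥ 0) (hv2 : v2 ≤ 0) (hx : x1 ≤ x2)
    (hdist : safeDistO aminBrake amaxAccel ρ v1 v2 ≤ x2 - x1)
    (ha1l : -amaxBrake ≤ a1) (ha1u : a1 ≤ amaxAccel)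
    (ha2l : -amaxAccel ≤ a2) (ha2u : a2 ≤ amaxBrake)
    (ht0 : 0 ≤ t) (htρ : t ≤ ρ)
    (hvsign : ∀ s : ℝ, 0 ≤ s → s ≤ t → v1 + a1 * s ≥ 0 ∧ v2 + a2 * s ≤ 0) :
    x1 + v1 * t + (1/2) * a1 * t^2 ≤ x2 + v2 * t + (1/2) * a2 * t^2 ∧
    (x1 + v1 * t + (1/2) * a1 * t^2) + (v1 + a1 * t)^2 / (2 * aminBrake)
      ≤ (x2 + v2 * t + (1/2) * a2 * t^2) - (v2 + a2 * t)^2 / (2 * aminBrake) :=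
  loop_invariant_free_driving_opposite_general aminBrake amaxAccel ρ hmin hacc x1 x2 v1 v2 a1 a2 t
    hv1 hv2 hdist ha1u ha2l ht0 htρ hvsign
end

section
/- Order preservation during proper-response braking, same direction: Suppose a_minBrake > 0, a_maxBrake ≥ a_minBrake, v1 ≥ 0, v2 ≥ 0, x1 ≤ x2, and x1 + v1²/(2·a_minBrake) ≤ x2 + v2²/(2·a_maxBrake). Suppose a1 ≤ −a_minBrake (or v1 = 0 and a1 = 0) and a2 ≥ −a_maxBrake (or v2 = 0 and a2 = 0), and let t ≥ 0 be such that v1 + a1·s ≥ 0 and v2 + a2·s ≥ 0 for all s ∈ [0, t]. Then for every s ∈ [0, t], x1 + v1·s + (1/2)·a1·s² ≤ x2 + v2·s + (1/2)·a2·s²; i.e., the rear car never passes the front car at any intermediate time of the braking maneuver. -/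
/-!
While a car brakes at least as hard as `b`, its stopping point `x + v²/(2b)` can only move
backwards, and while a car brakes at most as hard as `b` its stopping point can only move
forwards. So the rear car's stopping point (computed with `aminBrake`) stays behind the front
car's (computed with `amaxBrake`), which forces the rear car to be behind whenever it is the
faster one. When the front car is faster the gap grows, and the front car is faster on a final
interval of `[0, s]` that starts either at time `0` or at the moment the two velocities coincide.
-/

namespace Kinematics

noncomputable def position (x v a t : ℝ) : ℝ := x + v * t + 1/2 * a * t^2

def velocity (v a t : ℝ) : ℝ := v + a * t

noncomputable def stoppingPoint (x v b : ℝ) : ℝ := x + v^2 / (2 * b)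

@[simp] lemma position_zero (x v a : ℝ) : position x v a 0 = x := by
  simp [position]

@[simp] lemma velocity_zero (v a : ℝ) : velocity v a 0 = v := by
  simp [velocity]

lemma position_sub_position (x v a σ t : ℝ) :
    position x v a t - position x v a σ = (t - σ) * (velocity v a σ + velocity v a t) / 2 := by
  unfold position velocity; ring

lemma position_le_position_of_velocity_le {x₁ v₁ a₁ x₂ v₂ a₂ σ t : ℝ} (hσt : σ ≤ t)
    (hσ : velocity v₁ a₁ σ ≤ velocity v₂ a₂ σ) (ht : velocity v₁ a₁ t ≤ velocity v₂ a₂ t)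
    (hpos : position x₁ v₁ a₁ σ ≤ position x₂ v₂ a₂ σ) :
    position x₁ v₁ a₁ t ≤ position x₂ v₂ a₂ t := by
  have h := mul_le_mul_of_nonneg_left (add_le_add hσ ht) (sub_nonneg.2 hσt)
  linarith [position_sub_position x₁ v₁ a₁ σ t, position_sub_position x₂ v₂ a₂ σ t]

lemma stoppingPoint_sub_stoppingPoint {b : ℝ} (hb : b ≠ 0) (x v a σ : ℝ) :
    stoppingPoint (position x v a σ) (velocity v a σ) b - stoppingPoint x v b =
      σ * (v + velocity v a σ) * (a + b) / (2 * b) := by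
  unfold stoppingPoint position velocity
  field_simp
  ring

lemma stoppingPoint_le_of_le_neg {x v a b σ : ℝ} (hb : 0 < b) (ha : a ≤ -b) (hσ : 0 ≤ σ)
    (hv : 0 ≤ v + velocity v a σ) :
    stoppingPoint (position x v a σ) (velocity v a σ) b ≤ stoppingPoint x v b := by
  have h : σ * (v + velocity v a σ) * (a + b) / (2 * b) ≤ 0 :=
    div_nonpos_of_nonpos_of_nonneg
      (mul_nonpos_of_nonneg_of_nonpos (mul_nonneg hσ hv) (by linarith)) (by positivity)
  linarith [stoppingPoint_sub_stoppingPoint hb.ne' x v a σ]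

lemma le_stoppingPoint_of_neg_le {x v a b σ : ℝ} (hb : 0 < b) (ha : -b ≤ a) (hσ : 0 ≤ σ)
    (hv : 0 ≤ v + velocity v a σ) :
    stoppingPoint x v b ≤ stoppingPoint (position x v a σ) (velocity v a σ) b := by
  have h : 0 ≤ σ * (v + velocity v a σ) * (a + b) / (2 * b) :=
    div_nonneg (mul_nonneg (mul_nonneg hσ hv) (by linarith)) (by positivity)
  linarith [stoppingPoint_sub_stoppingPoint hb.ne' x v a σ]

lemma le_of_stoppingPoint_le {x₁ w₁ b₁ x₂ w₂ b₂ : ℝ} (hb₁ : 0 < b₁) (hb : b₁ ≤ b₂)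
    (hw₂ : 0 ≤ w₂) (hw : w₂ ≤ w₁) (h : stoppingPoint x₁ w₁ b₁ ≤ stoppingPoint x₂ w₂ b₂) :
    x₁ ≤ x₂ := by
  have hdist : w₂^2 / (2 * b₂) ≤ w₁^2 / (2 * b₁) :=
    calc w₂^2 / (2 * b₂) ≤ w₂^2 / (2 * b₁) := by gcongr
      _ ≤ w₁^2 / (2 * b₁) := by gcongr
  unfold stoppingPoint at h
  linarith

lemma exists_velocity_eq {v₁ a₁ v₂ a₂ s : ℝ} (hs : 0 ≤ s) (h₀ : v₂ ≤ v₁)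
    (hs' : velocity v₁ a₁ s ≤ velocity v₂ a₂ s) :
    ∃ σ ∈ Set.Icc 0 s, velocity v₁ a₁ σ = velocity v₂ a₂ σ := by
  have hcont : ContinuousOn (fun τ ↦ velocity v₂ a₂ τ - velocity v₁ a₁ τ) (Set.Icc 0 s) := by
    unfold velocity; fun_prop
  obtain ⟨σ, hσ, hσ0⟩ := intermediate_value_Icc hs hcont
    ⟨by simpa only [velocity_zero, sub_nonpos] using h₀, sub_nonneg.2 hs'⟩
  exact ⟨σ, hσ, (sub_eq_zero.1 hσ0).symm⟩

end Kinematics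

open Kinematics in
theorem order_preservation_proper_response_same_general
    (aminBrake amaxBrake : ℝ)
    (hmin : 0 < aminBrake) (hminmax : aminBrake ≤ amaxBrake)
    (x1 x2 v1 v2 a1 a2 t : ℝ)
    (hv1 : v1 ≥ 0) (hv2 : v2 ≥ 0) (hx : x1 ≤ x2)
    (hinv : x1 + v1^2 / (2 * aminBrake) ≤ x2 + v2^2 / (2 * amaxBrake))
    (ha1 : a1 ≤ -aminBrake ∨ (v1 = 0 ∧ a1 = 0))
    (ha2 : a2 ≥ -amaxBrake ∨ (v2 = 0 ∧ a2 = 0))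
    (hvpos : ∀ s : ℝ, 0 ≤ s → s ≤ t → v1 + a1 * s ≥ 0 ∧ v2 + a2 * s ≥ 0) :
    ∀ s : ℝ, 0 ≤ s → s ≤ t →
      x1 + v1 * s + (1/2) * a1 * s^2 ≤ x2 + v2 * s + (1/2) * a2 * s^2 := by
  intro s hs hst
  show position x1 v1 a1 s ≤ position x2 v2 a2 s
  have hvel : ∀ σ ∈ Set.Icc 0 s, 0 ≤ velocity v1 a1 σ ∧ 0 ≤ velocity v2 a2 σ :=
    fun σ hσ ↦ hvpos σ hσ.1 (hσ.2.trans hst)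
  rcases ha1 with hbrake1 | ⟨rfl, rfl⟩
  swap
  · exact position_le_position_of_velocity_le hs (by simpa using hv2)
      (by simpa [velocity] using (hvel s ⟨hs, le_rfl⟩).2) (by simpa using hx)
  have hbrake2 : -amaxBrake ≤ a2 := by rcases ha2 with h | ⟨_, rfl⟩ <;> linarith
  have hstop (σ) (hσ : σ ∈ Set.Icc 0 s) :
      stoppingPoint (position x1 v1 a1 σ) (velocity v1 a1 σ) aminBrake ≤
        stoppingPoint (position x2 v2 a2 σ) (velocity v2 a2 σ) amaxBrake :=
    calc _ ≤ stoppingPoint x1 v1 aminBrake :=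
          stoppingPoint_le_of_le_neg hmin hbrake1 hσ.1 (add_nonneg hv1 (hvel σ hσ).1)
      _ ≤ stoppingPoint x2 v2 amaxBrake := hinv
      _ ≤ _ := le_stoppingPoint_of_neg_le (hmin.trans_le hminmax) hbrake2 hσ.1
          (add_nonneg hv2 (hvel σ hσ).2)
  have hrear (σ) (hσ : σ ∈ Set.Icc 0 s) (hw : velocity v2 a2 σ ≤ velocity v1 a1 σ) :
      position x1 v1 a1 σ ≤ position x2 v2 a2 σ :=
    le_of_stoppingPoint_le hmin hminmax (hvel σ hσ).2 hw (hstop σ hσ)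
  rcases le_total (velocity v2 a2 s) (velocity v1 a1 s) with hs' | hs'
  · exact hrear s ⟨hs, le_rfl⟩ hs'
  rcases le_total v1 v2 with h0 | h0
  · exact position_le_position_of_velocity_le hs (by simpa using h0) hs' (by simpa using hx)
  obtain ⟨σ, hσ, hcross⟩ := exists_velocity_eq hs h0 hs'
  exact position_le_position_of_velocity_le hσ.2 hcross.le hs' (hrear σ hσ hcross.ge)

/-- Order preservation during proper-response braking, same direction. -/
theorem order_preservation_proper_response_same
    (aminBrake amaxBrake : ℝ)
    (hmin : 0 < aminBrake) (hminmax : aminBrake ≤ amaxBrake)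
    (x1 x2 v1 v2 a1 a2 t : ℝ)
    (hv1 : v1 ≥ 0) (hv2 : v2 ≥ 0) (hx : x1 ≤ x2)
    (hinv : x1 + v1^2 / (2 * aminBrake) ≤ x2 + v2^2 / (2 * amaxBrake))
    (ha1 : a1 ≤ -aminBrake ∨ (v1 = 0 ∧ a1 = 0))
    (ha2 : a2 ≥ -amaxBrake ∨ (v2 = 0 ∧ a2 = 0))
    (ht0 : t ≥ 0)
    (hvpos : ∀ s : ℝ, 0 ≤ s → s ≤ t → v1 + a1 * s ≥ 0 ∧ v2 + a2 * s ≥ 0) :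
    ∀ s : ℝ, 0 ≤ s → s ≤ t →
      x1 + v1 * s + (1/2) * a1 * s^2 ≤ x2 + v2 * s + (1/2) * a2 * s^2 :=
  order_preservation_proper_response_same_general aminBrake amaxBrake hmin hminmax x1 x2 v1 v2 a1 a2
    t hv1 hv2 hx hinv ha1 ha2 hvpos
end
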